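/- arXiv:math/9908008 — 3 statements merged into one kernel-verified Lean document; each statement's English description precedes it below -/
import Mathlib

section
/- With the roots $\alpha_1,\dots,\alpha_{2N}$ as above (i.e. $\alpha_l=\varepsilon_l-\varepsilon_{l+1}$ for $1\le l\le 2N-1$ and $\alpha_{2N}=\sum_{k=1}^{2N}\varepsilon_k$), the $2N\times 2N$ matrix $A$ with entries $a_{ij}=(\alpha_i,\alpha_j)$ for $i,j=1,\dots,2N$ is invertible. -/
/-!
Writing `α_i = ∑ₖ P i k • ε_k`, the matrix `A` factors as `P * G * Pᵀ` with `G = diag((-1)^(k+1))` the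
Gram matrix of the `ε`'s, so `det A = ± (det P)²`. A vector in the kernel of `P` has equal
consecutive coordinates (rows `α_l = ε_l - ε_{l+1}`) and coordinate sum zero (row `α_{2N}`), so it is
`0` because `2N ≠ 0` in characteristic zero.
-/

open Finset Matrix

theorem Fin.sum_univ_ite_val_eq {M : Type*} [AddCommMonoid M] (n m : ℕ) (f : ℕ → M) :
    ∑ k : Fin n, (if (k : ℕ) = m then f k else 0) = if m < n then f m else 0 := by
  rw [Fin.sum_univ_eq_sum_range (fun k => if k = m then f k else 0)]
  simp [sum_ite_eq']

theorem gram_sum_smul_eq_mul_mul_transpose {R V m n : Type*} [CommRing R] [AddCommGroup V]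
    [Module R V] [Fintype n] (B : V →ₗ[R] V →ₗ[R] R) (P : Matrix m n R) (w : n → V) :
    Matrix.of (fun i j => B (∑ k, P i k • w k) (∑ l, P j l • w l)) =
      P * Matrix.of (fun k l => B (w k) (w l)) * Pᵀ := by
  ext i j
  simp only [of_apply, map_sum, map_smul, LinearMap.sum_apply, LinearMap.smul_apply, smul_eq_mul,
    mul_apply, transpose_apply, sum_mul, mul_sum]
  exact sum_congr rfl fun k _ => sum_congr rfl fun l _ => by ring

/-- Row `i` holds the coordinates of `α_{i+1}` in the basis `ε_1, …, ε_n`. -/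
def rootCoeffMatrix (K : Type*) [Ring K] (n : ℕ) : Matrix (Fin n) (Fin n) K :=
  Matrix.of fun i k =>
    if (i : ℕ) + 1 = n then 1
    else (if (k : ℕ) = i then 1 else 0) - (if (k : ℕ) = i + 1 then 1 else 0)

theorem rootCoeffMatrix_sum_smul {K V : Type*} [Ring K] [AddCommGroup V] [Module K V] {n : ℕ}
    (i : Fin n) (w : ℕ → V) :
    ∑ k : Fin n, rootCoeffMatrix K n i k • w k =
      if (i : ℕ) + 1 = n then ∑ k : Fin n, w k else w i - w (i + 1) := by
  split_ifs with hi
  · simp [rootCoeffMatrix, hi]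
  · simp only [rootCoeffMatrix, of_apply, hi, if_false, sub_smul, ite_smul, one_smul, zero_smul,
      sum_sub_distrib, Fin.sum_univ_ite_val_eq, i.isLt, if_true]
    rw [if_pos (by omega)]

theorem det_rootCoeffMatrix_ne_zero (K : Type*) [Field K] [CharZero K] (n : ℕ) :
    (rootCoeffMatrix K n).det ≠ 0 := by
  rw [Ne, ← exists_mulVec_eq_zero_iff]
  rintro ⟨v, hv0, hv⟩
  apply hv0
  set u : ℕ → K := fun k => if h : k < n then v ⟨k, h⟩ else 0
  have hvu : ∀ k : Fin n, v k = u k := fun k => by simp [u]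
  have hrow (i : Fin n) :
      (if (i : ℕ) + 1 = n then ∑ k : Fin n, u k else u i - u (i + 1)) = 0 := by
    rw [← rootCoeffMatrix_sum_smul (K := K)]
    simpa only [mulVec, dotProduct, hvu, smul_eq_mul, Pi.zero_apply] using congrFun hv i
  have hconst : ∀ k < n, u k = u 0 := by
    intro k hk
    induction k with
    | zero => rfl
    | succ k ih =>
      have hstep := hrow ⟨k, by omega⟩
      rw [if_neg (by simp; omega), sub_eq_zero] at hstep
      rw [← ih (by omega), hstep]
  obtain _ | m := n
  · exact Subsingleton.elim _ _
  have hsum := hrow (Fin.last m)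
  rw [if_pos (Fin.val_last m ▸ rfl), sum_congr rfl fun (k : Fin (m + 1)) _ => hconst k k.isLt,
    sum_const, card_univ, Fintype.card_fin, nsmul_eq_mul, mul_eq_zero] at hsum
  funext k
  rw [hvu, hconst k k.isLt, Pi.zero_apply]
  exact hsum.resolve_left (by exact_mod_cast m.succ_ne_zero)

theorem cartan_matrix_invertible_general (N : ℕ) (V : Type*) [AddCommGroup V] [Module ℚ V]
    (B : V →ₗ[ℚ] V →ₗ[ℚ] ℚ) (ε : ℕ → V)
    (hε : ∀ k, 1 ≤ k → k ≤ 2 * N → ∀ k', 1 ≤ k' → k' ≤ 2 * N →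
      B (ε k) (ε k') = if k = k' then ((-1 : ℚ)) ^ (k + 1) else 0)
    (α : ℕ → V)
    (hαl : ∀ l, 1 ≤ l → l ≤ 2 * N - 1 → α l = ε l - ε (l + 1))
    (hα2N : α (2 * N) = ∑ k ∈ Finset.Icc 1 (2 * N), ε k) :
    (Matrix.of fun i j : Fin (2 * N) => B (α (i.val + 1)) (α (j.val + 1))).det ≠ 0 := by
  have hα (i : Fin (2 * N)) : α (i + 1) = ∑ k, rootCoeffMatrix ℚ (2 * N) i k • ε (k + 1) := by
    rw [rootCoeffMatrix_sum_smul i fun k => ε (k + 1)]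
    split_ifs with hi
    · rw [hi, hα2N, Fin.sum_univ_eq_sum_range (fun k => ε (k + 1)), range_eq_Ico, sum_Ico_add',
        zero_add, Ico_add_one_right_eq_Icc]
    · exact hαl _ (by omega) (by omega)
  have hε_diag : Matrix.of (fun k l : Fin (2 * N) => B (ε (k + 1)) (ε (l + 1))) =
      diagonal fun k : Fin (2 * N) => (-1 : ℚ) ^ ((k : ℕ) + 1 + 1) := by
    ext k l
    rw [of_apply, hε _ (by omega) (by omega) _ (by omega) (by omega), diagonal_apply]
    simp only [Nat.add_right_cancel_iff, Fin.val_inj]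
  have hA : Matrix.of (fun i j : Fin (2 * N) => B (α (i + 1)) (α (j + 1))) =
      rootCoeffMatrix ℚ (2 * N) * diagonal (fun k : Fin (2 * N) => (-1 : ℚ) ^ ((k : ℕ) + 1 + 1)) *
        (rootCoeffMatrix ℚ (2 * N))ᵀ := by
    simp only [hα, ← hε_diag, gram_sum_smul_eq_mul_mul_transpose]
  have hP := det_rootCoeffMatrix_ne_zero ℚ (2 * N)
  rw [hA, det_mul, det_mul, det_transpose, det_diagonal]
  exact mul_ne_zero (mul_ne_zero hP (prod_ne_zero_iff.2 fun _ _ => by simp)) hP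

/-- the enlarged Cartan matrix `a_{ij} = (α_i, α_j)`, `i,j = 1,…,2N`,
of `U_q[gl(N|N)^]` is invertible. -/
theorem cartan_matrix_invertible (N : ℕ) (hN : 1 ≤ N) (V : Type*) [AddCommGroup V] [Module ℚ V]
    (B : V →ₗ[ℚ] V →ₗ[ℚ] ℚ) (ε : ℕ → V)
    (hε : ∀ k, 1 ≤ k → k ≤ 2 * N → ∀ k', 1 ≤ k' → k' ≤ 2 * N →
      B (ε k) (ε k') = if k = k' then ((-1 : ℚ)) ^ (k + 1) else 0)
    (α : ℕ → V)
    (hαl : ∀ l, 1 ≤ l → l ≤ 2 * N - 1 → α l = ε l - ε (l + 1))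
    (hα2N : α (2 * N) = ∑ k ∈ Finset.Icc 1 (2 * N), ε k) :
    (Matrix.of fun i j : Fin (2 * N) => B (α (i.val + 1)) (α (j.val + 1))).det ≠ 0 :=
  cartan_matrix_invertible_general N V B ε hε α hαl hα2N
end

section
/- Let $a^j_n$ ($j=1,\dots,2N$, $n\in\mathbb{Z}\setminus\{0\}$) satisfy $[a^j_n,a^{j'}_m]=(-1)^{j+1}\delta_{jj'}\delta_{n+m,0}\frac{[n]_q^2}{n}$, and define $A^i_n=(-1)^{i+1}(a^i_n+a^{i+1}_n)$ for $1\le i\le 2N-1$ and $A^{2N}_n=\frac{q^n+q^{-n}}{2}\sum_{l=1}^{2N}(-1)^{l+1}a^l_n$. Then $[A^i_n,A^{i'}_m]=\delta_{n+m,0}\frac{[a_{ii'}n]_q[n]_q}{n}$ for $1\le i,i'\le 2N-1$, where $a_{ii'}=(\alpha_i,\alpha_{i'})$ is the Cartan matrix entry and $[x]_q=(q^x-q^{-x})/(q-q^{-1})$. -/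
/-- The q-integer `[n]_q = (qⁿ - q⁻ⁿ)/(q - q⁻¹)` for `n : ℤ`. -/
def qint {K : Type*} [Field K] (q : K) (n : ℤ) : K := (q ^ n - q ^ (-n)) / (q - q⁻¹)

/-- The Cartan matrix entries `a_{ii'} = (α_i, α_{i'})` of `sl(N|N)^` (1-based labels):
`a_{ii} = 0`, `a_{i,i+1} = a_{i+1,i} = (-1)^{i+1}`, and zero otherwise. -/
def cart (i i' : ℕ) : ℤ :=
  if i = i' then 0
  else if i' = i + 1 then (-1) ^ (i + 1)
  else if i = i' + 1 then (-1) ^ (i' + 1)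
  else 0

lemma qint_zero {K : Type*} [Field K] (q : K) : qint q 0 = 0 := by simp [qint]

lemma qint_neg {K : Type*} [Field K] (q : K) (n : ℤ) : qint q (-n) = -qint q n := by
  unfold qint; rw [neg_neg, ← neg_div, neg_sub]

lemma comm_expand {A : Type*} [Ring A] (x1 x2 y1 y2 : A) :
    (x1 + x2) * (y1 + y2) - (y1 + y2) * (x1 + x2) =
      (x1 * y1 - y1 * x1) + (x1 * y2 - y2 * x1) + (x2 * y1 - y1 * x2) +
        (x2 * y2 - y2 * x2) := by noncomm_ring

/-- the combinations `A^i_n = (-1)^{i+1}(a^i_n + a^{i+1}_n)` of the bosonic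
oscillators satisfy the level-one Heisenberg relations
`[A^i_n, A^{i'}_m] = δ_{n+m,0} [a_{ii'}n]_q [n]_q / n` for `1 ≤ i, i' ≤ 2N-1`. -/
theorem heisenberg_relations {K A : Type*} [Field K] [Ring A] [Algebra K A]
    (N : ℕ) (hN : 1 ≤ N) (q : K) (hq : q ≠ 0) (hq1 : q - q⁻¹ ≠ 0)
    (a : ℕ → ℤ → A)
    (hcomm : ∀ j j', 1 ≤ j → j ≤ 2 * N → 1 ≤ j' → j' ≤ 2 * N →
      ∀ n m : ℤ, n ≠ 0 → m ≠ 0 →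
        a j n * a j' m - a j' m * a j n =
          if j = j' ∧ n + m = 0 then
            (((-1 : K)) ^ (j + 1) * (qint q n) ^ 2 / ((n : ℤ) : K)) • (1 : A)
          else 0) :
    ∀ i i', 1 ≤ i → i ≤ 2 * N - 1 → 1 ≤ i' → i' ≤ 2 * N - 1 →
      ∀ n m : ℤ, n ≠ 0 → m ≠ 0 →
        (((-1 : K)) ^ (i + 1) • (a i n + a (i + 1) n)) *
            (((-1 : K)) ^ (i' + 1) • (a i' m + a (i' + 1) m)) -
          (((-1 : K)) ^ (i' + 1) • (a i' m + a (i' + 1) m)) *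
            (((-1 : K)) ^ (i + 1) • (a i n + a (i + 1) n)) =
        if n + m = 0 then
          ((qint q (cart i i' * n)) * qint q n / ((n : ℤ) : K)) • (1 : A)
        else 0 := by
  intro i i' hi1 hi2 hi'1 hi'2 n m hn hm
  have hA : i ≤ 2 * N := by omega
  have hB : i + 1 ≤ 2 * N := by omega
  have hA' : i' ≤ 2 * N := by omega
  have hB' : i' + 1 ≤ 2 * N := by omega
  have h1i : 1 ≤ i + 1 := by omega
  have h1i' : 1 ≤ i' + 1 := by omega
  have c11 := hcomm i i' hi1 hA hi'1 hA' n m hn hm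
  have c12 := hcomm i (i' + 1) hi1 hA h1i' hB' n m hn hm
  have c21 := hcomm (i + 1) i' h1i hB hi'1 hA' n m hn hm
  have c22 := hcomm (i + 1) (i' + 1) h1i hB h1i' hB' n m hn hm
  have key : (((-1 : K)) ^ (i + 1) • (a i n + a (i + 1) n)) *
            (((-1 : K)) ^ (i' + 1) • (a i' m + a (i' + 1) m)) -
          (((-1 : K)) ^ (i' + 1) • (a i' m + a (i' + 1) m)) *
            (((-1 : K)) ^ (i + 1) • (a i n + a (i + 1) n)) =
      ((-1 : K) ^ (i + 1) * (-1 : K) ^ (i' + 1)) •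
        ((a i n + a (i + 1) n) * (a i' m + a (i' + 1) m) -
          (a i' m + a (i' + 1) m) * (a i n + a (i + 1) n)) := by
    rw [smul_mul_assoc, smul_mul_assoc, mul_smul_comm, mul_smul_comm,
      smul_smul, smul_smul, mul_comm ((-1 : K) ^ (i' + 1)), smul_sub]
  rw [key, comm_expand, c11, c12, c21, c22]
  by_cases hnm : n + m = 0
  · rw [if_pos hnm]
    by_cases h0 : i = i'
    · subst h0
      rw [if_pos ⟨rfl, hnm⟩, if_neg (by omega), if_neg (by omega), if_pos ⟨rfl, hnm⟩]
      have hc : cart i i = 0 := by simp [cart]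
      rw [hc, zero_mul, qint_zero, zero_mul, zero_div, zero_smul]
      simp only [add_zero, zero_add]
      rw [smul_add, smul_smul, smul_smul, ← add_smul]
      have : (-1 : K) ^ (i + 1) * (-1 : K) ^ (i + 1) *
            ((-1 : K) ^ (i + 1) * qint q n ^ 2 / ((n : ℤ) : K)) +
          (-1 : K) ^ (i + 1) * (-1 : K) ^ (i + 1) *
            ((-1 : K) ^ (i + 1 + 1) * qint q n ^ 2 / ((n : ℤ) : K)) = 0 := by
        rw [pow_succ]; ring
      rw [this, zero_smul]
    · by_cases h1 : i' = i + 1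
      · subst h1
        rw [if_neg (by omega), if_neg (by omega), if_pos ⟨rfl, hnm⟩, if_neg (by omega)]
        have hc : cart i (i + 1) = (-1) ^ (i + 1) := by simp [cart, h0]
        rw [hc]
        simp only [add_zero, zero_add]
        rw [smul_smul]
        rcases Nat.even_or_odd i with hp | hp
        · have e1 : (-1 : K) ^ (i + 1) = -1 := (hp.add_one).neg_one_pow
          have e2 : (-1 : K) ^ (i + 1 + 1) = 1 := by
            rw [pow_succ, e1]; ring
          have e3 : ((-1 : ℤ)) ^ (i + 1) = -1 := (hp.add_one).neg_one_pow
          rw [e1, e2, e3, show ((-1 : ℤ)) * n = -n from neg_one_mul n, qint_neg]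
          congr 1
          ring
        · have e1 : (-1 : K) ^ (i + 1) = 1 := (hp.add_one).neg_one_pow
          have e2 : (-1 : K) ^ (i + 1 + 1) = -1 := by
            rw [pow_succ, e1]; ring
          have e3 : ((-1 : ℤ)) ^ (i + 1) = 1 := (hp.add_one).neg_one_pow
          rw [e1, e2, e3, one_mul]
          congr 1
          ring
      · by_cases h2 : i = i' + 1
        · subst h2
          rw [if_neg (by omega), if_pos ⟨rfl, hnm⟩, if_neg (by omega), if_neg (by omega)]
          have hc : cart (i' + 1) i' = (-1) ^ (i' + 1) := by
            simp [cart, show ¬ (i' + 1 = i') by omega, show ¬ (i' = i' + 1 + 1) by omega]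
          rw [hc]
          simp only [add_zero, zero_add]
          rw [smul_smul]
          rcases Nat.even_or_odd i' with hp | hp
          · have e1 : (-1 : K) ^ (i' + 1) = -1 := (hp.add_one).neg_one_pow
            have e2 : (-1 : K) ^ (i' + 1 + 1) = 1 := by
              rw [pow_succ, e1]; ring
            have e3 : ((-1 : ℤ)) ^ (i' + 1) = -1 := (hp.add_one).neg_one_pow
            rw [e1, e2, e3, show ((-1 : ℤ)) * n = -n from neg_one_mul n, qint_neg]
            congr 1
            ring
          · have e1 : (-1 : K) ^ (i' + 1) = 1 := (hp.add_one).neg_one_pow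
            have e2 : (-1 : K) ^ (i' + 1 + 1) = -1 := by
              rw [pow_succ, e1]; ring
            have e3 : ((-1 : ℤ)) ^ (i' + 1) = 1 := (hp.add_one).neg_one_pow
            rw [e1, e2, e3, one_mul]
            congr 1
            ring
        · rw [if_neg (by omega), if_neg (by omega), if_neg (by omega), if_neg (by omega)]
          have hc : cart i i' = 0 := by simp [cart, h0, fun h => h1 h, h2]
          rw [hc, zero_mul, qint_zero, zero_mul, zero_div, zero_smul]
          simp
  · rw [if_neg hnm, if_neg (by tauto), if_neg (by tauto), if_neg (by tauto), if_neg (by tauto)]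
    simp
end

section
/- For $U_q[\widehat{gl(1|1)}]$ (case $N=1$), the $4\times4$ R-matrix with entries $R^{11}_{11}=1$, $R^{22}_{22}=\frac{zq^{-1}-q}{zq-q^{-1}}$, $R^{12}_{12}=R^{21}_{21}=\frac{z-1}{zq-q^{-1}}$, $R^{21}_{12}=\frac{q-q^{-1}}{zq-q^{-1}}$, $R^{12}_{21}=\frac{(q-q^{-1})z}{zq-q^{-1}}$ (and zero otherwise, with parities $[1]=0$, $[2]=1$) satisfies simultaneously: (i) $R(1)=P$ (graded permutation), (ii) unitarity $R_{12}(z)R_{21}(z^{-1})=1$, and (iii) the graded Yang-Baxter equation. -/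
/-- Parity of the `i`-th (0-based) basis vector: the paper's `[v_j] = ((-1)^j+1)/2`
for the label `j = i+1`, i.e. `i.val % 2`. -/
def RPar {n : ℕ} (i : Fin n) : ℕ := i.val % 2

/-- The R-matrix of `U_q[gl(N|N)^]` (indices 0-based, labels `i+1`).
Row index `(k,l)`, column index `(i,j)` corresponds to the entry `R^{kl}_{ij}(z)`. -/
def Rmat {K : Type*} [Field K] {n : ℕ} (q z : K) :
    Matrix (Fin n × Fin n) (Fin n × Fin n) K := fun kl ij =>
  if kl.1 = ij.1 ∧ kl.2 = ij.2 ∧ ij.1 = ij.2 then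
    (if ij.1.val % 2 = 0 then 1 else (z * q⁻¹ - q) / (z * q - q⁻¹))
  else if kl.1 = ij.1 ∧ kl.2 = ij.2 then (z - 1) / (z * q - q⁻¹)
  else if kl.1 = ij.2 ∧ kl.2 = ij.1 ∧ ij.1 < ij.2 then
    (-1 : K) ^ (RPar ij.1 * RPar ij.2) * (q - q⁻¹) / (z * q - q⁻¹)
  else if kl.1 = ij.2 ∧ kl.2 = ij.1 ∧ ij.2 < ij.1 then
    (-1 : K) ^ (RPar ij.1 * RPar ij.2) * (q - q⁻¹) * z / (z * q - q⁻¹)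
  else 0

/-- Action on legs 1,2 of the graded triple tensor product. -/
def leg12 {K : Type*} [Ring K] {n : ℕ} (M : Matrix (Fin n × Fin n) (Fin n × Fin n) K) :
    Matrix (Fin n × Fin n × Fin n) (Fin n × Fin n × Fin n) K := fun x y =>
  M (x.1, x.2.1) (y.1, y.2.1) * (if x.2.2 = y.2.2 then 1 else 0)

/-- Action on legs 2,3 of the graded triple tensor product. -/
def leg23 {K : Type*} [Ring K] {n : ℕ} (M : Matrix (Fin n × Fin n) (Fin n × Fin n) K) :
    Matrix (Fin n × Fin n × Fin n) (Fin n × Fin n × Fin n) K := fun x y =>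
  (if x.1 = y.1 then 1 else 0) * M (x.2.1, x.2.2) (y.2.1, y.2.2)

/-- Action on legs 1,3 of the graded triple tensor product, with the
graded sign `(-1)^{[b]([a]+[a'])}` from passing the middle leg. -/
def leg13 {K : Type*} [Ring K] {n : ℕ} (M : Matrix (Fin n × Fin n) (Fin n × Fin n) K) :
    Matrix (Fin n × Fin n × Fin n) (Fin n × Fin n × Fin n) K := fun x y =>
  M (x.1, x.2.2) (y.1, y.2.2) * (if x.2.1 = y.2.1 then 1 else 0) *
    (-1 : K) ^ (RPar x.2.1 * (RPar x.1 + RPar y.1))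

/-- The graded permutation operator `P(v_i ⊗ v_j) = (-1)^{[i][j]} v_j ⊗ v_i`. -/
def Pmat {K : Type*} [Ring K] {n : ℕ} : Matrix (Fin n × Fin n) (Fin n × Fin n) K := fun kl ij =>
  if kl.1 = ij.2 ∧ kl.2 = ij.1 then (-1 : K) ^ (RPar ij.1 * RPar ij.2) else 0

/-- Supertransposition in the first tensor factor:
`(M^{st1})^{kl}_{ij} = M^{il}_{kj} (-1)^{[i]([i]+[k])}`. -/
def st1 {K : Type*} [Ring K] {n : ℕ} (M : Matrix (Fin n × Fin n) (Fin n × Fin n) K) :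
    Matrix (Fin n × Fin n) (Fin n × Fin n) K := fun kl ij =>
  M (ij.1, kl.2) (kl.1, ij.2) * (-1 : K) ^ (RPar ij.1 * (RPar ij.1 + RPar kl.1))
def Nmat {K : Type*} [Field K] (q z : K) :
    Matrix (Fin 2 × Fin 2) (Fin 2 × Fin 2) K := fun kl ij =>
  if kl.1 = ij.1 ∧ kl.2 = ij.2 ∧ ij.1 = ij.2 then
    (if ij.1.val % 2 = 0 then z * q - q⁻¹ else z * q⁻¹ - q)
  else if kl.1 = ij.1 ∧ kl.2 = ij.2 then z - 1
  else if kl.1 = ij.2 ∧ kl.2 = ij.1 ∧ ij.1 < ij.2 then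
    (-1 : K) ^ (RPar ij.1 * RPar ij.2) * (q - q⁻¹)
  else if kl.1 = ij.2 ∧ kl.2 = ij.1 ∧ ij.2 < ij.1 then
    (-1 : K) ^ (RPar ij.1 * RPar ij.2) * (q - q⁻¹) * z
  else 0

lemma Rmat_eq_smul {K : Type*} [Field K] (q z : K) (h : z * q - q⁻¹ ≠ 0) :
    Rmat (n := 2) q z = (z * q - q⁻¹)⁻¹ • Nmat q z := by
  ext ⟨a,b⟩ ⟨c,d⟩
  fin_cases a <;> fin_cases b <;> fin_cases c <;> fin_cases d <;>
    simp [Rmat, Nmat, RPar, Matrix.smul_apply, div_eq_inv_mul, mul_comm, mul_assoc, mul_left_comm] <;> rw [mul_inv_cancel₀ (by rw [mul_comm]; exact h)]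

set_option maxHeartbeats 2000000 in
lemma Nunit {K : Type*} [Field K] (q z : K) (hq : q ≠ 0) (hz : z ≠ 0) :
    Nmat (K := K) q z * (Pmat * Nmat q z⁻¹ * Pmat) =
      ((z * q - q⁻¹) * (z⁻¹ * q - q⁻¹)) • (1 : Matrix (Fin 2 × Fin 2) (Fin 2 × Fin 2) K) := by
  ext ⟨a,b⟩ ⟨c,d⟩
  fin_cases a <;> fin_cases b <;> fin_cases c <;> fin_cases d <;>
    simp [Matrix.mul_apply, Fintype.sum_prod_type, Fin.sum_univ_two, Nmat, Pmat, RPar,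
      Matrix.one_apply, Matrix.smul_apply, Prod.ext_iff] <;>
    field_simp <;> ring

set_option maxHeartbeats 8000000 in
lemma Nybe {K : Type*} [Field K] (q z w : K) (hq : q ≠ 0) :
    leg12 (Nmat (K := K) q z) * leg13 (Nmat q (z * w)) * leg23 (Nmat q w) =
      leg23 (Nmat q w) * leg13 (Nmat q (z * w)) * leg12 (Nmat q z) := by
  ext ⟨a,b,c⟩ ⟨d,e,f⟩
  fin_cases a <;> fin_cases b <;> fin_cases c <;> fin_cases d <;> fin_cases e <;> fin_cases f <;>
    simp [Matrix.mul_apply, Fintype.sum_prod_type, Fin.sum_univ_two, leg12, leg13, leg23,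
      Nmat, Pmat, RPar, Prod.ext_iff] <;>
    field_simp <;> ring

lemma leg12_smul {K : Type*} [Field K] (c : K) (M : Matrix (Fin 2 × Fin 2) (Fin 2 × Fin 2) K) :
    leg12 (c • M) = c • leg12 M := by
  ext x y; simp [leg12, Matrix.smul_apply, mul_assoc]

lemma leg23_smul {K : Type*} [Field K] (c : K) (M : Matrix (Fin 2 × Fin 2) (Fin 2 × Fin 2) K) :
    leg23 (c • M) = c • leg23 M := by
  ext x y; simp [leg23, Matrix.smul_apply, mul_left_comm]

lemma leg13_smul {K : Type*} [Field K] (c : K) (M : Matrix (Fin 2 × Fin 2) (Fin 2 × Fin 2) K) :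
    leg13 (c • M) = c • leg13 M := by
  ext x y; simp [leg13, Matrix.smul_apply]; ring

/-- the 4×4 R-matrix of `U_q[gl(1|1)^]` (case `N = 1`) satisfies
(i) `R(1) = P`, (ii) unitarity `R₁₂(z) R₂₁(z⁻¹) = 1`, (iii) the graded Yang-Baxter
equation. -/
theorem gl11_R_matrix_properties {K : Type*} [Field K] (q z w : K)
    (hq : q ≠ 0) (hz : z ≠ 0) (hw : w ≠ 0) (hqq : q - q⁻¹ ≠ 0)
    (h1 : z * q - q⁻¹ ≠ 0) (h2 : w * q - q⁻¹ ≠ 0) (h3 : z * w * q - q⁻¹ ≠ 0)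
    (h4 : z⁻¹ * q - q⁻¹ ≠ 0) :
    (Rmat (n := 2) q 1 = Pmat) ∧
    (Rmat (n := 2) q z * (Pmat * Rmat (n := 2) q z⁻¹ * Pmat) = 1) ∧
    (leg12 (Rmat (n := 2) q z) * leg13 (Rmat (n := 2) q (z * w)) *
        leg23 (Rmat (n := 2) q w) =
      leg23 (Rmat (n := 2) q w) * leg13 (Rmat (n := 2) q (z * w)) *
        leg12 (Rmat (n := 2) q z)) := by
  have hq2 : q * q - 1 ≠ 0 := by
    have := mul_ne_zero hq hqq
    rwa [mul_sub, mul_inv_cancel₀ hq] at this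
  refine ⟨?_, ?_, ?_⟩
  · ext ⟨a,b⟩ ⟨c,d⟩
    fin_cases a <;> fin_cases b <;> fin_cases c <;> fin_cases d <;>
      simp [Rmat, Pmat, RPar] <;> field_simp <;> rw [← sq] at hq2 <;>
      simp only [mul_zero, div_eq_iff hq2, hq2, not_false_eq_true] <;> ring
  · rw [Rmat_eq_smul q z h1, Rmat_eq_smul q z⁻¹ h4]
    rw [Matrix.mul_smul, Matrix.smul_mul, Matrix.smul_mul, Matrix.mul_smul,
      smul_smul, Nunit q z hq hz]
    rw [smul_smul]
    rw [mul_mul_mul_comm, inv_mul_cancel₀ h1, inv_mul_cancel₀ h4, mul_one, one_smul]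
  · rw [Rmat_eq_smul q z h1, Rmat_eq_smul q w h2, Rmat_eq_smul q (z*w) (by rwa [mul_assoc] at h3 ⊢)]
    rw [leg12_smul, leg13_smul, leg23_smul]
    simp only [Matrix.smul_mul, Matrix.mul_smul, smul_smul]
    rw [Nybe q z w hq]
    congr 1
    ring
end
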